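/- There exists a constant c > 0 such that the following holds in the random model whenever n ≥ 2 and 1 ≤ k ≤ n−1: with probability at least 1 − 2·exp(−k·(n−k)·(nk)^{−0.98}/6) − 2^{2n+1}·exp(−3·(n−k)/2) over A, for every finite simple graph G = (V,E) in which S is an independent set and in which {u,v} ∈ E for every (u,v) ∈ E'(A), and for every feasible C-SDP solution x* : V → ℝⁿ for G with obj(x*) ≤ obj(y) for every feasible C-SDP solution y : V → ℝ^{n+1} for G, one has ∑_{(u,v) ∈ S × S} ‖x*_u − x*_v‖² ≤ c·n·√k. -/

import Mathlib

open Finset MeasureTheory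

/-- The product measure of independent fair coins, one for each pair of vertices. -/
noncomputable def coin (V : Type) [Fintype V] : Measure ((V × V) → Bool) :=
  Measure.pi fun _ => (PMF.bernoulli 2⁻¹ (by norm_num)).toMeasure

/-- `E'(A)`: the set of pairs `(u,v) ∈ S × (V∖S)` whose coin came up heads. -/
def Eset {V : Type} [Fintype V] [DecidableEq V] (S : Finset V) (A : (V × V) → Bool) :
    Finset (V × V) :=
  Finset.univ.filter fun p => p.1 ∈ S ∧ p.2 ∉ S ∧ A p = true

/-- A feasible solution to the crude SDP: unit vectors, pairwise nonnegative inner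
products, and orthogonal vectors on edges. -/
def Feasible {V : Type*} {H : Type*} [NormedAddCommGroup H] [InnerProductSpace ℝ H]
    (G : SimpleGraph V) (x : V → H) : Prop :=
  (∀ v, ‖x v‖ = 1) ∧ (∀ u v : V, (0 : ℝ) ≤ inner ℝ (x u) (x v)) ∧
    (∀ u v : V, G.Adj u v → (inner ℝ (x u) (x v) : ℝ) = 0)

/-- The crude SDP objective: the sum of squared distances over all ordered pairs. -/
noncomputable def obj {V : Type*} [Fintype V] {H : Type*} [NormedAddCommGroup H]
    [InnerProductSpace ℝ H] (x : V → H) : ℝ :=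
  ∑ u : V, ∑ v : V, ‖x u - x v‖ ^ 2

/-!
Let `C = ∑_{u ∈ S, v ∉ S} ⟪x u, x v⟫`. Sending all of `S` to one unit vector orthogonal to
`ℝⁿ ⊆ ℝⁿ⁺¹` and keeping `x` elsewhere is feasible because `S` is independent, and comparing `obj x`
with its objective bounds the `S × S` part of `obj x` by `4 C`. Since `x u ⟂ x v` on the pairs of
`E'(A)`, `C = ∑ M u v ⟪x u, x v⟫` for the random sign matrix `M u v = ±1` (`-1` exactly when
`A (u, v)` holds), so `C ≤ ‖M‖ √(k (n - k))`. Finally `‖M‖ ≤ 2 √(11 n)` outside an event of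
probability `81ⁿ e^{-11n/2}`: it is enough to bound `⟪M p, q⟫` for `p, q` in a `1/4`-net of the unit
sphere of `ℝ^V`, which has at most `9ⁿ` points, and each `⟪M p, q⟫` is a Rademacher sum with
coefficients of unit `ℓ²` norm, hence sub-Gaussian by Hoeffding's lemma.
-/

open Module Metric ProbabilityTheory Real
open scoped RealInnerProductSpace NNReal ENNReal Matrix Matrix.Norms.L2Operator

section Hoeffding

def boolSign (b : Bool) : ℝ := if b then -1 else 1

@[fun_prop]
lemma measurable_boolSign : Measurable boolSign := .of_discrete

/-- `coin V` is `fairCoins (V × V)` by definition. -/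
noncomputable def fairCoins (ι : Type*) [Fintype ι] : Measure (ι → Bool) :=
  Measure.pi fun _ => (PMF.bernoulli 2⁻¹ (by norm_num)).toMeasure

variable {ι : Type*} [Fintype ι]

instance : IsProbabilityMeasure (fairCoins ι) := by
  unfold fairCoins; infer_instance

lemma ProbabilityTheory.HasSubgaussianMGF.mono {Ω : Type*} {mΩ : MeasurableSpace Ω}
    {μ : Measure Ω} {X : Ω → ℝ} {c d : ℝ≥0} (h : HasSubgaussianMGF X c μ) (hcd : c ≤ d) :
    HasSubgaussianMGF X d μ :=
  ⟨h.integrable_exp_mul, fun t => (h.mgf_le t).trans (exp_le_exp.2 (by gcongr))⟩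

lemma hasSubgaussianMGF_mul_boolSign (w : ι → ℝ) (p : ι) :
    HasSubgaussianMGF (fun A : ι → Bool => w p * boolSign (A p)) (‖w p‖₊ ^ 2) (fairCoins ι) := by
  have hmean : ∫ A, w p * boolSign (A p) ∂(fairCoins ι) = 0 := by
    rw [integral_const_mul, fairCoins, integral_comp_eval (by fun_prop), PMF.integral_eq_sum]
    norm_num [boolSign, PMF.bernoulli_apply]
  have hbound : ∀ A : ι → Bool, w p * boolSign (A p) ∈ Set.Icc (-|w p|) |w p| := fun A => by
    cases A p <;> simp [boolSign, neg_abs_le, neg_le_abs, le_abs_self]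
  convert hasSubgaussianMGF_of_mem_Icc_of_integral_eq_zero (Measurable.aemeasurable (by fun_prop))
    (ae_of_all _ hbound) hmean using 1
  ext
  simp [← two_mul]

lemma fairCoins_le_sum_mul_boolSign_le (w : ι → ℝ) (hw : ∑ p, w p ^ 2 ≤ 1) {t : ℝ} (ht : 0 ≤ t) :
    fairCoins ι {A | t ≤ ∑ p, w p * boolSign (A p)} ≤ ENNReal.ofReal (exp (-t ^ 2 / 2)) := by
  have hsum : HasSubgaussianMGF (fun A => ∑ p, w p * boolSign (A p)) 1 (fairCoins ι) := by
    refine (HasSubgaussianMGF.sum_of_iIndepFun ?_ fun p _ =>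
      hasSubgaussianMGF_mul_boolSign w p).mono ?_
    · exact iIndepFun_pi (X := fun p (b : Bool) => w p * boolSign b) fun p => by fun_prop
    · rw [← NNReal.coe_le_coe]; push_cast; simpa using hw
  rw [← ofReal_measureReal]
  simpa using ENNReal.ofReal_le_ofReal (hsum.measure_ge_le ht)

end Hoeffding

section Nets

lemma Metric.IsCover.exists_norm_sub_le {E : Type*} [SeminormedAddCommGroup E] {ε : ℝ≥0}
    {s N : Set E} (h : IsCover ε s N) {x : E} (hx : x ∈ s) : ∃ y ∈ N, ‖x - y‖ ≤ ε := by
  simpa [dist_eq_norm] using h.subset_iUnion_closedBall hx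

variable {E : Type*} [NormedAddCommGroup E] [NormedSpace ℝ E] [FiniteDimensional ℝ E]
  [MeasurableSpace E] [BorelSpace E]

/-- Volume argument: the balls of radius `ε / 2` around the points of `F` are disjoint and lie in
the ball of radius `1 + ε / 2`. -/
lemma card_le_of_isSeparated_of_subset_closedBall {ε : ℝ≥0} (hε : 0 < ε) {F : Finset E}
    (hF : (F : Set E) ⊆ closedBall 0 1) (hsep : IsSeparated ε (F : Set E)) :
    (F.card : ℝ) ≤ (1 + 2 / ε) ^ finrank ℝ E := by
  set μ : Measure E := Measure.addHaar
  have hdisj : (F : Set E).PairwiseDisjoint fun y => ball y (ε / 2) := fun y hy z hz hyz =>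
    ball_disjoint_ball <| by
      have h : (ε : ℝ≥0∞) < edist y z := hsep hy hz hyz
      rw [edist_nndist, ENNReal.coe_lt_coe, ← NNReal.coe_lt_coe, coe_nndist] at h
      linarith
  have hsub : (⋃ y ∈ F, ball y (ε / 2)) ⊆ ball (0 : E) (1 + ε / 2) := by
    simp only [Set.iUnion_subset_iff]
    intro y hy z hz
    rw [mem_ball, dist_zero_right]
    rw [mem_ball] at hz
    have hy1 := mem_closedBall_zero_iff.mp (hF hy)
    calc ‖z‖ ≤ ‖y‖ + dist z y := by rw [dist_eq_norm]; exact norm_le_norm_add_norm_sub' z y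
      _ < 1 + ε / 2 := by linarith
  have hvol := measure_mono (μ := μ) hsub
  rw [measure_biUnion_finset hdisj fun _ _ => measurableSet_ball,
    Finset.sum_congr rfl fun y _ => μ.addHaar_ball_of_pos y (by positivity : (0:ℝ) < ε / 2),
    Finset.sum_const, nsmul_eq_mul, μ.addHaar_ball_of_pos 0 (by positivity : (0:ℝ) < 1 + ε / 2),
    ← mul_assoc, ENNReal.mul_le_mul_iff_left (measure_ball_pos μ (0 : E) one_pos).ne'
      measure_ball_lt_top.ne,
    ← ENNReal.ofReal_natCast, ← ENNReal.ofReal_mul (by positivity),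
    ENNReal.ofReal_le_ofReal_iff (by positivity)] at hvol
  have hε' : (0 : ℝ) < ε := hε
  rwa [show 1 + 2 / (ε : ℝ) = (1 + ε / 2) / (ε / 2) by field_simp; ring, div_pow,
    le_div_iff₀ (by positivity)]

lemma exists_finset_isCover_of_subset_closedBall {ε : ℝ≥0} (hε : 0 < ε) {A : Set E}
    (hA : A ⊆ closedBall 0 1) :
    ∃ N : Finset E, ↑N ⊆ A ∧ IsCover ε A N ∧ (N.card : ℝ) ≤ (1 + 2 / ε) ^ finrank ℝ E := by
  set B := ⌊(1 + 2 / (ε : ℝ)) ^ finrank ℝ E⌋₊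
  have hfin : ∀ F : Finset E, ↑F ⊆ A → IsSeparated ε (F : Set E) → F.card ≤ B := fun F hFA hF =>
    Nat.le_floor (card_le_of_isSeparated_of_subset_closedBall hε (hFA.trans hA) hF)
  have hpack : packingNumber ε A ≤ B := by
    refine iSup₂_le fun C hCA => iSup_le fun hC => ?_
    have hCfin : C.Finite := by
      by_contra hinf
      obtain ⟨F, hFC, hF⟩ := Set.Infinite.exists_subset_card_eq hinf (B + 1)
      have := hfin F (hFC.trans hCA) (hC.subset hFC)
      omega
    rw [hCfin.encard_eq_coe_toFinset_card, Nat.cast_le]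
    exact hfin _ (by simpa using hCA) (by simpa using hC)
  have hne : packingNumber ε A ≠ ⊤ := ne_top_of_le_ne_top (by simp) hpack
  have hN : (maximalSeparatedSet ε A).Finite :=
    Set.encard_ne_top_iff.mp (encard_maximalSeparatedSet hne ▸ hne)
  refine ⟨hN.toFinset, by simpa using maximalSeparatedSet_subset,
    by simpa using isCover_maximalSeparatedSet hne, ?_⟩
  have hcard := (encard_maximalSeparatedSet hne).trans_le hpack
  rw [hN.encard_eq_coe_toFinset_card, Nat.cast_le] at hcard
  exact (Nat.cast_le.mpr hcard).trans (Nat.floor_le (by positivity))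

end Nets

section OperatorNorm

lemma ContinuousLinearMap.opNorm_le_of_isCover {E F : Type*} [NormedAddCommGroup E]
    [InnerProductSpace ℝ E] [NormedAddCommGroup F] [InnerProductSpace ℝ F] (f : E →L[ℝ] F)
    {N : Set E} {N' : Set F} (hN : N ⊆ closedBall 0 1) (hNc : IsCover (1 / 4) (sphere 0 1) N)
    (hN'c : IsCover (1 / 4) (sphere 0 1) N') {t : ℝ} (ht : 0 ≤ t)
    (hf : ∀ p ∈ N, ∀ q ∈ N', ⟪f p, q⟫ ≤ t) :
    ‖f‖ ≤ 2 * t := by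
  suffices h : ∀ u, ‖u‖ = 1 → ‖f u‖ ≤ t + ‖f‖ / 2 by
    linarith [f.opNorm_le_of_unit_norm (by positivity) h]
  intro u hu
  by_cases hfu : f u = 0
  · rw [hfu, norm_zero]; positivity
  set z := ‖f u‖⁻¹ • f u
  have hz : ‖z‖ = 1 := norm_smul_inv_norm hfu
  obtain ⟨p, hpN, hup⟩ := hNc.exists_norm_sub_le (mem_sphere_zero_iff_norm.mpr hu)
  obtain ⟨q, hqN', hzq⟩ := hN'c.exists_norm_sub_le (mem_sphere_zero_iff_norm.mpr hz)
  have hp : ‖p‖ ≤ 1 := mem_closedBall_zero_iff.mp (hN hpN)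
  have hfuz : ‖f u‖ = ⟪f u, z⟫ := by
    rw [real_inner_smul_right, real_inner_self_eq_norm_sq]
    field_simp [norm_ne_zero_iff.mpr hfu]
  have h1 : ⟪f (u - p), z⟫ ≤ ‖f‖ * (1 / 4) := calc
    _ ≤ ‖f (u - p)‖ * ‖z‖ := real_inner_le_norm _ _
    _ ≤ ‖f‖ * ‖u - p‖ := by rw [hz, mul_one]; exact f.le_opNorm _
    _ ≤ ‖f‖ * (1 / 4) := by gcongr; exact_mod_cast hup
  have h2 : ⟪f p, z - q⟫ ≤ ‖f‖ * (1 / 4) := calc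
    _ ≤ ‖f p‖ * ‖z - q‖ := real_inner_le_norm _ _
    _ ≤ ‖f‖ * ‖p‖ * ‖z - q‖ := by gcongr; exact f.le_opNorm _
    _ ≤ ‖f‖ * 1 * (1 / 4) := by gcongr; exact_mod_cast hzq
    _ = ‖f‖ * (1 / 4) := by rw [mul_one]
  have hsplit : ⟪f u, z⟫ = ⟪f (u - p), z⟫ + ⟪f p, z - q⟫ + ⟪f p, q⟫ := by
    rw [map_sub, inner_sub_left, inner_sub_right]; ring
  linarith [hf p hpN q hqN']

variable {a : Type*} [Fintype a]

lemma Matrix.l2_opNorm_le_of_isCover [DecidableEq a] (M : Matrix a a ℝ) {N : Set (EuclideanSpace ℝ a)}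
    (hN : N ⊆ closedBall 0 1) (hNc : IsCover (1 / 4) (sphere 0 1) N) {t : ℝ} (ht : 0 ≤ t)
    (hM : ∀ p ∈ N, ∀ q ∈ N, ∑ u, ∑ v, q u * p v * M u v ≤ t) :
    ‖M‖ ≤ 2 * t := by
  rw [← l2_opNorm_toEuclideanCLM]
  refine (toEuclideanCLM (𝕜 := ℝ) M).opNorm_le_of_isCover hN hNc hNc ht fun p hp q hq => ?_
  convert hM p hp q hq using 1
  simp [PiLp.inner_apply, Matrix.mulVec, dotProduct, Finset.mul_sum]
  exact Finset.sum_congr rfl fun u _ => Finset.sum_congr rfl fun v _ => by ring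

lemma Matrix.sum_mul_inner_le_l2_opNorm {b ι : Type*} [Fintype b] [DecidableEq b]
    [Fintype ι] (M : Matrix a b ℝ) (x : a → EuclideanSpace ℝ ι) (y : b → EuclideanSpace ℝ ι) :
    ∑ u, ∑ v, M u v * ⟪x u, y v⟫ ≤ ‖M‖ * √(∑ u, ‖x u‖ ^ 2) * √(∑ v, ‖y v‖ ^ 2) := by
  let X : ι → EuclideanSpace ℝ a := fun i => WithLp.toLp 2 fun u => x u i
  let Y : ι → EuclideanSpace ℝ b := fun i => WithLp.toLp 2 fun v => y v i
  have hX : ∑ i, ‖X i‖ ^ 2 = ∑ u, ‖x u‖ ^ 2 := by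
    simp only [EuclideanSpace.real_norm_sq_eq, X]
    exact Finset.sum_comm
  have hY : ∑ i, ‖Y i‖ ^ 2 = ∑ v, ‖y v‖ ^ 2 := by
    simp only [EuclideanSpace.real_norm_sq_eq, Y]
    exact Finset.sum_comm
  have hlhs : ∑ u, ∑ v, M u v * ⟪x u, y v⟫
      = ∑ i, ⟪X i, (EuclideanSpace.equiv a ℝ).symm (M *ᵥ Y i)⟫ := by
    simp [X, Y, PiLp.inner_apply, Matrix.mulVec, dotProduct, Finset.mul_sum, Finset.sum_mul]
    conv_lhs => enter [2, u]; rw [Finset.sum_comm]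
    rw [Finset.sum_comm]
    exact Finset.sum_congr rfl fun i _ => Finset.sum_congr rfl fun u _ =>
      Finset.sum_congr rfl fun v _ => by ring
  calc ∑ u, ∑ v, M u v * ⟪x u, y v⟫
      = ∑ i, ⟪X i, (EuclideanSpace.equiv a ℝ).symm (M *ᵥ Y i)⟫ := hlhs
    _ ≤ ∑ i, ‖X i‖ * (‖M‖ * ‖Y i‖) :=
        Finset.sum_le_sum fun i _ => (real_inner_le_norm _ _).trans
          (mul_le_mul_of_nonneg_left (M.l2_opNorm_mulVec _) (norm_nonneg _))
    _ = ‖M‖ * ∑ i, ‖X i‖ * ‖Y i‖ := by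
        rw [Finset.mul_sum]; exact Finset.sum_congr rfl fun i _ => by ring
    _ ≤ ‖M‖ * (√(∑ i, ‖X i‖ ^ 2) * √(∑ i, ‖Y i‖ ^ 2)) :=
        mul_le_mul_of_nonneg_left (Real.sum_mul_le_sqrt_mul_sqrt _ _ _) (norm_nonneg _)
    _ = ‖M‖ * √(∑ u, ‖x u‖ ^ 2) * √(∑ v, ‖y v‖ ^ 2) := by rw [hX, hY, mul_assoc]

end OperatorNorm

section Relaxation

lemma Finset.sum_sum_eq_blocks {V : Type*} [Fintype V] [DecidableEq V] (S : Finset V)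
    (f : V → V → ℝ) (hf : ∀ u v, f u v = f v u) :
    ∑ u, ∑ v, f u v = ∑ u ∈ S, ∑ v ∈ S, f u v + 2 * ∑ u ∈ S, ∑ v ∈ Sᶜ, f u v
      + ∑ u ∈ Sᶜ, ∑ v ∈ Sᶜ, f u v := by
  have hswap : ∑ u ∈ Sᶜ, ∑ v ∈ S, f u v = ∑ u ∈ S, ∑ v ∈ Sᶜ, f u v := by
    rw [Finset.sum_comm]; simp_rw [hf]
  simp only [← Finset.sum_add_sum_compl S, Finset.sum_add_distrib, hswap]
  ring

lemma exists_linearIsometry_and_orthogonal_unit {E F : Type*} [NormedAddCommGroup E]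
    [InnerProductSpace ℝ E] [FiniteDimensional ℝ E] [NormedAddCommGroup F]
    [InnerProductSpace ℝ F] [FiniteDimensional ℝ F] (h : finrank ℝ F = finrank ℝ E + 1) :
    ∃ (ι : E →ₗᵢ[ℝ] F) (e : F), ‖e‖ = 1 ∧ ∀ z, ⟪e, ι z⟫ = 0 := by
  have : Nontrivial F := Module.nontrivial_of_finrank_pos (R := ℝ) (by omega)
  obtain ⟨e, he⟩ := exists_norm_eq F zero_le_one
  have : Fact (finrank ℝ F = finrank ℝ E + 1) := ⟨h⟩
  have hK : finrank ℝ E = finrank ℝ (ℝ ∙ e)ᗮ :=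
    (Submodule.finrank_orthogonal_span_singleton (norm_ne_zero_iff.mp (by simp [he]))).symm
  let ιK : E ≃ₗᵢ[ℝ] (ℝ ∙ e)ᗮ :=
    (stdOrthonormalBasis ℝ E).equiv (stdOrthonormalBasis ℝ (ℝ ∙ e)ᗮ) (finCongr hK)
  refine ⟨(ℝ ∙ e)ᗮ.subtypeₗᵢ.comp ιK.toLinearIsometry, e, he, fun z => ?_⟩
  exact Submodule.mem_orthogonal_singleton_iff_inner_right.mp (ιK z).2

variable {V E F : Type*} [DecidableEq V] [NormedAddCommGroup E] [InnerProductSpace ℝ E]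
  [NormedAddCommGroup F] [InnerProductSpace ℝ F]

def collapse (S : Finset V) (ι : E →ₗᵢ[ℝ] F) (e : F) (x : V → E) (v : V) : F :=
  if v ∈ S then e else ι (x v)

variable {S : Finset V} {ι : E →ₗᵢ[ℝ] F} {e : F}

lemma feasible_collapse {G : SimpleGraph V} {x : V → E} (hx : Feasible G x)
    (hS : ∀ u ∈ S, ∀ v ∈ S, ¬ G.Adj u v) (he : ‖e‖ = 1) (heι : ∀ z, ⟪e, ι z⟫ = 0) :
    Feasible G (collapse S ι e x) := by
  obtain ⟨hunit, hnonneg, hadj⟩ := hx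
  have heι' : ∀ z, ⟪ι z, e⟫ = 0 := fun z => by rw [real_inner_comm, heι]
  refine ⟨fun v => ?_, fun u v => ?_, fun u v huv => ?_⟩
  · by_cases hv : v ∈ S <;> simp [collapse, hv, he, hunit]
  · by_cases hu : u ∈ S <;> by_cases hv : v ∈ S <;>
      simp [collapse, hu, hv, heι, heι', he, hnonneg]
  · by_cases hu : u ∈ S <;> by_cases hv : v ∈ S
    · exact absurd huv (hS u hu v hv)
    all_goals simp [collapse, hu, hv, heι, heι', hadj u v huv]

variable [Fintype V]

lemma sum_sq_dist_le_of_obj_le_collapse {x : V → E} (hx : ∀ v, ‖x v‖ = 1) (he : ‖e‖ = 1)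
    (heι : ∀ z, ⟪e, ι z⟫ = 0) (hobj : obj x ≤ obj (collapse S ι e x)) :
    ∑ u ∈ S, ∑ v ∈ S, ‖x u - x v‖ ^ 2 ≤ 4 * ∑ u ∈ S, ∑ v ∈ Sᶜ, ⟪x u, x v⟫ := by
  set y := collapse S ι e x
  have hSS : ∀ u ∈ S, ∀ v ∈ S, ‖y u - y v‖ ^ 2 = 0 := fun u hu v hv => by
    simp [y, collapse, hu, hv]
  have hSSc : ∀ u ∈ S, ∀ v ∈ Sᶜ, ‖y u - y v‖ ^ 2 = ‖x u - x v‖ ^ 2 + 2 * ⟪x u, x v⟫ :=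
    fun u hu v hv => by
      rw [Finset.mem_compl] at hv
      simp only [y, collapse, hu, hv, if_true, if_false]
      rw [norm_sub_sq_real, norm_sub_sq_real, heι, he, ι.norm_map, hx, hx]
      ring
  have hScSc : ∀ u ∈ Sᶜ, ∀ v ∈ Sᶜ, ‖y u - y v‖ ^ 2 = ‖x u - x v‖ ^ 2 := fun u hu v hv => by
    rw [Finset.mem_compl] at hu hv
    simp only [y, collapse, hu, hv, if_false, ← map_sub, ι.norm_map]
  rw [obj, obj, S.sum_sum_eq_blocks _ fun u v => by rw [norm_sub_rev],
    S.sum_sum_eq_blocks _ fun u v => by rw [norm_sub_rev],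
    Finset.sum_congr rfl fun u hu => Finset.sum_congr rfl (hSS u hu),
    Finset.sum_congr rfl fun u hu => Finset.sum_congr rfl (hSSc u hu),
    Finset.sum_congr rfl fun u hu => Finset.sum_congr rfl (hScSc u hu)] at hobj
  simp only [Finset.sum_add_distrib, ← Finset.mul_sum, Finset.sum_const_zero] at hobj
  linarith

end Relaxation

lemma sum_sq_dist_le_of_optimal {V : Type} [Fintype V] [DecidableEq V] {n : ℕ}
    {G : SimpleGraph V} {S : Finset V} (hS : ∀ u ∈ S, ∀ v ∈ S, ¬ G.Adj u v)
    {x : V → EuclideanSpace ℝ (Fin n)} (hx : Feasible G x)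
    (hopt : ∀ y : V → EuclideanSpace ℝ (Fin (n + 1)), Feasible G y → obj x ≤ obj y) :
    ∑ u ∈ S, ∑ v ∈ S, ‖x u - x v‖ ^ 2 ≤ 4 * ∑ u ∈ S, ∑ v ∈ Sᶜ, ⟪x u, x v⟫ := by
  obtain ⟨ι, e, he, heι⟩ := exists_linearIsometry_and_orthogonal_unit
    (E := EuclideanSpace ℝ (Fin n)) (F := EuclideanSpace ℝ (Fin (n + 1))) (by simp)
  exact sum_sq_dist_le_of_obj_le_collapse hx.1 he heι (hopt _ (feasible_collapse hx hS he heι))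

section SignMatrix

variable {V : Type} [Fintype V] [DecidableEq V]

def signMatrix (A : V × V → Bool) : Matrix V V ℝ :=
  Matrix.of fun u v => boolSign (A (u, v))

lemma sum_inner_le_l2_opNorm_signMatrix {n : ℕ} {G : SimpleGraph V} {S : Finset V}
    {A : V × V → Bool} {x : V → EuclideanSpace ℝ (Fin n)} (hx : Feasible G x)
    (hA : ∀ p ∈ Eset S A, G.Adj p.1 p.2) :
    ∑ u ∈ S, ∑ v ∈ Sᶜ, ⟪x u, x v⟫ ≤ ‖signMatrix A‖ * √(#S) * √(#Sᶜ) := by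
  obtain ⟨hunit, -, hadj⟩ := hx
  let xS : V → EuclideanSpace ℝ (Fin n) := fun u => if u ∈ S then x u else 0
  let xSc : V → EuclideanSpace ℝ (Fin n) := fun v => if v ∈ Sᶜ then x v else 0
  have hsign : ∀ u ∈ S, ∀ v ∉ S, boolSign (A (u, v)) * ⟪x u, x v⟫ = ⟪x u, x v⟫ := by
    intro u hu v hv
    cases h : A (u, v)
    · simp [boolSign]
    · simp [hadj u v (hA (u, v) (by simp [Eset, hu, hv, h]))]
  have hlhs : ∑ u ∈ S, ∑ v ∈ Sᶜ, ⟪x u, x v⟫ = ∑ u, ∑ v, signMatrix A u v * ⟪xS u, xSc v⟫ := by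
    have hterm : ∀ u v, signMatrix A u v * ⟪xS u, xSc v⟫
        = if u ∈ S then (if v ∈ Sᶜ then ⟪x u, x v⟫ else 0) else 0 := fun u v => by
      by_cases hu : u ∈ S <;> by_cases hv : v ∈ Sᶜ <;>
        simp_all [xS, xSc, signMatrix]
    simp only [hterm, Finset.sum_ite_irrel, Finset.sum_const_zero, Fintype.sum_ite_mem]
  have hcard : ∀ T : Finset V, ∑ v, ‖if v ∈ T then x v else 0‖ ^ 2 = #T := fun T => by
    simp [apply_ite, hunit]
  rw [hlhs, ← hcard S, ← hcard Sᶜ]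
  exact (signMatrix A).sum_mul_inner_le_l2_opNorm xS xSc

lemma fairCoins_two_mul_lt_l2_opNorm_signMatrix_le {t : ℝ} (ht : 0 ≤ t) :
    fairCoins (V × V) {A | 2 * t < ‖signMatrix A‖}
      ≤ ENNReal.ofReal (81 ^ Fintype.card V * exp (-t ^ 2 / 2)) := by
  obtain ⟨N, hNS, hNc, hNcard⟩ := exists_finset_isCover_of_subset_closedBall
    (E := EuclideanSpace ℝ V) (ε := 1 / 4) (by norm_num) sphere_subset_closedBall
  rw [finrank_euclideanSpace] at hNcard
  norm_num at hNcard
  let w : EuclideanSpace ℝ V → EuclideanSpace ℝ V → V × V → ℝ := fun p q r => q r.1 * p r.2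
  have hw : ∀ p ∈ N, ∀ q ∈ N, ∑ r, w p q r ^ 2 ≤ 1 := fun p hp q hq => by
    have hp := hNS hp; have hq := hNS hq
    simp only [mem_sphere_zero_iff_norm] at hp hq
    rw [Fintype.sum_prod_type]
    simp only [w, mul_pow, ← Finset.mul_sum, ← Finset.sum_mul]
    rw [← EuclideanSpace.real_norm_sq_eq, ← EuclideanSpace.real_norm_sq_eq, hp, hq]
    norm_num
  have hsub : {A | 2 * t < ‖signMatrix A‖}
      ⊆ ⋃ p ∈ N, ⋃ q ∈ N, {A | t ≤ ∑ r, w p q r * boolSign (A r)} := by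
    intro A hA
    by_contra hnot
    simp only [Set.mem_iUnion, Set.mem_ofPred_eq, not_exists, not_le] at hnot
    refine (not_le.mpr hA) ((signMatrix A).l2_opNorm_le_of_isCover
      (hNS.trans sphere_subset_closedBall) hNc ht fun p hp q hq => ?_)
    simpa [w, Fintype.sum_prod_type, signMatrix] using (hnot p hp q hq).le
  calc fairCoins (V × V) {A | 2 * t < ‖signMatrix A‖}
      ≤ ∑ p ∈ N, ∑ q ∈ N, fairCoins (V × V) {A | t ≤ ∑ r, w p q r * boolSign (A r)} :=
        (measure_mono hsub).trans <| (measure_biUnion_finset_le _ _).trans <|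
          Finset.sum_le_sum fun p _ => measure_biUnion_finset_le _ _
    _ ≤ ∑ p ∈ N, ∑ q ∈ N, ENNReal.ofReal (exp (-t ^ 2 / 2)) :=
        Finset.sum_le_sum fun p hp => Finset.sum_le_sum fun q hq =>
          fairCoins_le_sum_mul_boolSign_le _ (hw p hp q hq) ht
    _ = ENNReal.ofReal (N.card * N.card * exp (-t ^ 2 / 2)) := by
        simp [ENNReal.ofReal_mul, mul_assoc]
    _ ≤ ENNReal.ofReal (81 ^ Fintype.card V * exp (-t ^ 2 / 2)) := by
        gcongr
        calc (N.card : ℝ) * N.card ≤ 9 ^ Fintype.card V * 9 ^ Fintype.card V := by gcongr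
          _ = 81 ^ Fintype.card V := by rw [← mul_pow]; norm_num

end SignMatrix

lemma eighty_one_pow_mul_exp_le (n : ℕ) {k : ℝ} (hk : 0 ≤ k) :
    81 ^ n * exp (-(11 * n) / 2) ≤ 2 ^ (2 * n + 1) * exp (-(3 * (n - k)) / 2) := by
  have h81 : (81 : ℝ) ≤ 4 * exp 4 := by
    have he : exp 4 = exp 1 ^ 4 := by rw [← exp_nat_mul]; norm_num
    rw [he]
    nlinarith [pow_le_pow_left₀ (by norm_num) exp_one_gt_d9.le 4]
  calc (81 : ℝ) ^ n * exp (-(11 * n) / 2) ≤ (4 * exp 4) ^ n * exp (-(11 * n) / 2) := by gcongr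
    _ = 4 ^ n * exp (-(3 * n) / 2) := by
        rw [mul_pow, ← exp_nat_mul, mul_assoc, ← exp_add]; ring_nf
    _ ≤ 2 ^ (2 * n + 1) * exp (-(3 * (n - k)) / 2) := by
        gcongr
        · rw [pow_succ, pow_mul]; norm_num
        · linarith

lemma eight_mul_sqrt_mul_le {n k : ℝ} (hk : 0 ≤ k) (hkn : k ≤ n) :
    8 * √(11 * n) * √k * √(n - k) ≤ 27 * n * √k := by
  have hn : 0 ≤ n := hk.trans hkn
  have h11 : 8 * √11 ≤ 27 := by
    rw [show (27 : ℝ) = 8 * √((27 / 8) ^ 2) by rw [sqrt_sq (by norm_num)]; norm_num]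
    gcongr; norm_num
  calc 8 * √(11 * n) * √k * √(n - k) ≤ 8 * (√11 * √n) * √k * √n := by
        rw [sqrt_mul (by norm_num)]; gcongr; linarith
    _ = 8 * √11 * (√n * √n) * √k := by ring
    _ ≤ 27 * n * √k := by rw [mul_self_sqrt hn]; gcongr

theorem stmt7 : ∃ c : ℝ, 0 < c ∧
    ∀ (V : Type) [Fintype V] [DecidableEq V] (n k : ℕ),
      Fintype.card V = n → 2 ≤ n → ∀ S : Finset V, S.card = k → 1 ≤ k → k ≤ n - 1 →
      1 - ENNReal.ofReal
            (2 * Real.exp (-((k : ℝ) * ((n : ℝ) - k) * ((n : ℝ) * k) ^ (-(0.98 : ℝ))) / 6))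
        - ENNReal.ofReal ((2 : ℝ) ^ (2 * n + 1) * Real.exp (-(3 * ((n : ℝ) - k)) / 2))
      ≤ coin V {A | ∀ G : SimpleGraph V,
          (∀ u ∈ S, ∀ v ∈ S, ¬ G.Adj u v) →
          (∀ p ∈ Eset S A, G.Adj p.1 p.2) →
          ∀ x : V → EuclideanSpace ℝ (Fin n), Feasible G x →
          (∀ y : V → EuclideanSpace ℝ (Fin (n + 1)), Feasible G y → obj x ≤ obj y) →
          ∑ u ∈ S, ∑ v ∈ S, ‖x u - x v‖ ^ 2 ≤ c * n * Real.sqrt k} := by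
  refine ⟨27, by norm_num, fun V _ _ n k hV _ S hS _ hkn => ?_⟩
  have hkn : k ≤ n := hkn.trans (Nat.sub_le n 1)
  set t := √(11 * n)
  have hbad := fairCoins_two_mul_lt_l2_opNorm_signMatrix_le (V := V) (sqrt_nonneg (11 * n))
  rw [sq_sqrt (by positivity), hV] at hbad
  calc _ ≤ 1 - ENNReal.ofReal ((2 : ℝ) ^ (2 * n + 1) * exp (-(3 * ((n : ℝ) - k)) / 2)) :=
        tsub_le_tsub_right tsub_le_self _
    _ ≤ 1 - fairCoins (V × V) {A | 2 * t < ‖signMatrix A‖} :=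
        tsub_le_tsub_left (hbad.trans (ENNReal.ofReal_le_ofReal
          (eighty_one_pow_mul_exp_le n (Nat.cast_nonneg k)))) 1
    _ = fairCoins (V × V) {A | ‖signMatrix A‖ ≤ 2 * t} := by
        rw [← prob_compl_eq_one_sub (.of_discrete)]
        simp only [Set.compl_ofPred, not_lt]
    _ ≤ coin V _ := measure_mono fun A hA => ?_
  intro G hSind hE x hx hopt
  replace hA : ‖signMatrix A‖ ≤ 2 * t := hA
  have hcard : ((#Sᶜ : ℕ) : ℝ) = n - k := by
    rw [Finset.card_compl, hV, hS, Nat.cast_sub hkn]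
  calc ∑ u ∈ S, ∑ v ∈ S, ‖x u - x v‖ ^ 2 ≤ 4 * ∑ u ∈ S, ∑ v ∈ Sᶜ, ⟪x u, x v⟫ :=
        sum_sq_dist_le_of_optimal hSind hx hopt
    _ ≤ 4 * (2 * t * √k * √(n - k)) := by
        rw [← hcard, ← hS]
        gcongr
        exact (sum_inner_le_l2_opNorm_signMatrix hx hE).trans (by gcongr)
    _ ≤ 27 * n * √k := by
        linarith [eight_mul_sqrt_mul_le (Nat.cast_nonneg k) (Nat.cast_le.mpr hkn)]
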